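/- arXiv:2406.06014 — 2 statements merged into one kernel-verified Lean document; each statement's English description precedes it below -/
import Mathlib

section
/- Let $Q$ be a $K \times K$ orthogonal matrix, $P$ a permutation matrix, and $S$ a diagonal sign matrix, such that $Q = PQS$ and $\mathbf{1}^\top Q_{\cdot,j} \neq 0$ for every column $j$ of $Q$ (where $\mathbf{1}$ is the all-ones vector). Then $P = I$. -/
/-!
Left multiplication by a permutation matrix preserves column sums, and right multiplication by a
diagonal `S` scales column `j` by `S j j`. So `Q = PQS` with nonzero column sums forces `S = 1`;
then `PQ = Q` with `Q` invertible gives `P = 1`.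
-/

open Matrix

lemma Equiv.Perm.one_vecMul_permMatrix {n R : Type*} [Fintype n] [DecidableEq n] [CommRing R]
    (σ : Equiv.Perm n) : (1 : n → R) ᵥ* σ.permMatrix R = 1 := by
  rw [vecMul_permMatrix]
  rfl

lemma Matrix.IsDiag.eq_one_of_vecMul_eq_self {n R : Type*} [Fintype n] [DecidableEq n]
    [Semiring R] [IsLeftCancelMulZero R] {S : Matrix n n R} (hS : S.IsDiag) {c : n → R}
    (hc : ∀ j, c j ≠ 0) (h : c ᵥ* S = c) : S = 1 := by
  rw [← hS.diagonal_diag] at h ⊢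
  rw [← diagonal_one]
  congr 1
  funext j
  have hj : c j * S j j = c j := by simpa only [vecMul_diagonal, diag_apply] using congrFun h j
  exact (mul_eq_left₀ (hc j)).mp hj

theorem stmt_3_general (K : ℕ) (Q S : Matrix (Fin K) (Fin K) ℝ) (σ : Equiv.Perm (Fin K))
    (hQorth : Q * Qᵀ = 1)
    (hSdiag : S.IsDiag)
    (heq : Q = σ.permMatrix ℝ * Q * S)
    (hcols : ∀ j, (∑ i, Q i j) ≠ 0) :
    σ.permMatrix ℝ = 1 := by
  have hcolsums : (1 ᵥ* Q) ᵥ* S = 1 ᵥ* Q := by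
    conv_rhs => rw [heq]
    rw [← vecMul_vecMul, ← vecMul_vecMul, σ.one_vecMul_permMatrix]
  have hS : S = 1 := hSdiag.eq_one_of_vecMul_eq_self
    (fun j => by simpa only [vecMul, dotProduct, Pi.one_apply, one_mul] using hcols j) hcolsums
  rw [hS, mul_one] at heq
  calc σ.permMatrix ℝ = σ.permMatrix ℝ * (Q * Qᵀ) := by rw [hQorth, mul_one]
    _ = Q * Qᵀ := by rw [← mul_assoc, ← heq]
    _ = 1 := hQorth

theorem stmt_3 (K : ℕ) (Q S : Matrix (Fin K) (Fin K) ℝ) (σ : Equiv.Perm (Fin K))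
    (hQorth : Q * Qᵀ = 1)
    (hSdiag : S.IsDiag) (hSsign : ∀ k, S k k = 1 ∨ S k k = -1)
    (heq : Q = σ.permMatrix ℝ * Q * S)
    (hcols : ∀ j, (∑ i, Q i j) ≠ 0) :
    σ.permMatrix ℝ = 1 :=
  stmt_3_general K Q S σ hQorth hSdiag heq hcols
end

section
/- Let $B \in [0,1]^{K \times K}$ be a symmetric matrix with eigenvalue decomposition $B = \sum_{k=1}^K \lambda_k q_k q_k^\top$, and suppose $B$ is $(\theta,\eta)$-friendly, i.e., $|\lambda_k - \lambda_\ell| > \eta$ for all $k \neq \ell$ and $|q_k^\top \mathbf{1}| > \theta$ for all $k$, with $\theta, \eta > 0$. Then for any symmetric matrix $B'$, there is at most one permutation matrix $P^*$ satisfying $B' = P^* B P^{*\top}$. -/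
/-!
If `P₁ B P₁ᵀ = P₂ B P₂ᵀ`, then `B` is invariant under relabelling its indices by
`τ = σ₁ σ₂⁻¹`, so each `q k ∘ τ` is again an eigenvector for `lam k`. The eigenvalues are
simple, hence `q k ∘ τ = c • q k`; relabelling preserves the coordinate sum, which is nonzero,
so `c = 1`. A permutation fixing every vector of an orthonormal basis is the identity.
-/

open Matrix

section Eigendecomposition

variable {R ι n : Type*} [CommSemiring R] [Fintype ι] [Fintype n] {B : Matrix n n R}
  {lam : ι → R} {q : ι → n → R}

theorem mulVec_eq_sum_of_eq_sum_vecMulVec (hB : B = ∑ k, lam k • vecMulVec (q k) (q k))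
    (v : n → R) :
    B *ᵥ v = ∑ k, (lam k * (q k ⬝ᵥ v)) • q k := by
  simp [hB, sum_mulVec, smul_mulVec, vecMulVec_mulVec, mul_smul]

variable [DecidableEq ι]

theorem dotProduct_mulVec_of_orthonormal (horth : ∀ k l, q k ⬝ᵥ q l = if k = l then 1 else 0)
    (hB : B = ∑ k, lam k • vecMulVec (q k) (q k)) (l : ι) (v : n → R) :
    q l ⬝ᵥ (B *ᵥ v) = lam l * (q l ⬝ᵥ v) := by
  simp [mulVec_eq_sum_of_eq_sum_vecMulVec hB, dotProduct_sum, horth]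

theorem mulVec_eq_smul_of_orthonormal (horth : ∀ k l, q k ⬝ᵥ q l = if k = l then 1 else 0)
    (hB : B = ∑ k, lam k • vecMulVec (q k) (q k)) (l : ι) :
    B *ᵥ q l = lam l • q l := by
  simp [mulVec_eq_sum_of_eq_sum_vecMulVec hB, horth, eq_comm]

end Eigendecomposition

section OrthonormalBasis

variable {R n : Type*} [CommRing R] [Fintype n] [DecidableEq n] {q : n → n → R}

theorem transpose_mul_self_of_orthonormal
    (horth : ∀ k l, q k ⬝ᵥ q l = if k = l then 1 else 0) :
    (of q)ᵀ * of q = 1 :=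
  mul_eq_one_comm.mp <| ext fun k l => by simpa [mul_apply, one_apply, dotProduct] using horth k l

theorem sum_mul_eq_ite_of_orthonormal (horth : ∀ k l, q k ⬝ᵥ q l = if k = l then 1 else 0)
    (i j : n) :
    ∑ k, q k i * q k j = if i = j then 1 else 0 := by
  simpa [mul_apply, one_apply] using congrFun₂ (transpose_mul_self_of_orthonormal horth) i j

theorem sum_dotProduct_smul_of_orthonormal
    (horth : ∀ k l, q k ⬝ᵥ q l = if k = l then 1 else 0) (v : n → R) :
    ∑ k, (q k ⬝ᵥ v) • q k = v :=
  calc ∑ k, (q k ⬝ᵥ v) • q k = (of q)ᵀ *ᵥ (of q *ᵥ v) := by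
        ext i; simp [mulVec, dotProduct, mul_comm]
    _ = v := by rw [mulVec_mulVec, transpose_mul_self_of_orthonormal horth, one_mulVec]

end OrthonormalBasis

theorem permMatrix_mul_mul_transpose_permMatrix {R n : Type*} [Fintype n] [DecidableEq n]
    [NonAssocSemiring R] (σ : Equiv.Perm n) (M : Matrix n n R) :
    σ.permMatrix R * M * (σ.permMatrix R)ᵀ = M.submatrix σ σ := by
  rw [transpose_permMatrix, PEquiv.toMatrix_toPEquiv_mul, PEquiv.mul_toMatrix_toPEquiv]
  rfl

section SimpleSpectrum

variable {R n : Type*} [Field R] [Fintype n] [DecidableEq n] {B : Matrix n n R} {lam : n → R}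
  {q : n → n → R}

theorem eq_dotProduct_smul_of_mulVec_eq_smul
    (horth : ∀ k l, q k ⬝ᵥ q l = if k = l then 1 else 0)
    (hB : B = ∑ k, lam k • vecMulVec (q k) (q k)) (hlam : Function.Injective lam) {k : n}
    {v : n → R} (hv : B *ᵥ v = lam k • v) :
    v = (q k ⬝ᵥ v) • q k := by
  conv_lhs => rw [← sum_dotProduct_smul_of_orthonormal horth v]
  refine Finset.sum_eq_single k (fun l _ hlk => ?_) (by simp)
  have h : lam l * (q l ⬝ᵥ v) = lam k * (q l ⬝ᵥ v) := by
    rw [← dotProduct_mulVec_of_orthonormal horth hB, hv, dotProduct_smul, smul_eq_mul]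
  rw [(mul_eq_mul_right_iff.mp h).resolve_left (hlam.ne hlk), zero_smul]

namespace Equiv.Perm

variable {τ : Perm n}

theorem comp_eq_of_submatrix_eq_self (horth : ∀ k l, q k ⬝ᵥ q l = if k = l then 1 else 0)
    (hB : B = ∑ k, lam k • vecMulVec (q k) (q k)) (hlam : Function.Injective lam)
    (hsum : ∀ k, ∑ i, q k i ≠ 0) (hτ : B.submatrix τ τ = B) (k : n) :
    q k ∘ τ = q k := by
  have hw : B *ᵥ (q k ∘ τ) = lam k • (q k ∘ τ) := by
    conv_lhs => rw [← hτ]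
    rw [submatrix_mulVec_equiv, Function.comp_assoc, Equiv.self_comp_symm, Function.comp_id,
      mulVec_eq_smul_of_orthonormal horth hB]
    rfl
  set c := q k ⬝ᵥ (q k ∘ τ)
  have hc : q k ∘ τ = c • q k := eq_dotProduct_smul_of_mulVec_eq_smul horth hB hlam hw
  have hc_sum : c * ∑ i, q k i = ∑ i, q k i :=
    calc c * ∑ i, q k i = ∑ i, (q k ∘ τ) i := by rw [hc, Finset.mul_sum]; rfl
      _ = ∑ i, q k i := Equiv.sum_comp τ (q k)
  rw [hc, (mul_eq_right₀ (hsum k)).mp hc_sum, one_smul]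

theorem eq_one_of_submatrix_eq_self (horth : ∀ k l, q k ⬝ᵥ q l = if k = l then 1 else 0)
    (hB : B = ∑ k, lam k • vecMulVec (q k) (q k)) (hlam : Function.Injective lam)
    (hsum : ∀ k, ∑ i, q k i ≠ 0) (hτ : B.submatrix τ τ = B) : τ = 1 := by
  ext j
  have hfix (k : n) : q k (τ j) = q k j :=
    congrFun (comp_eq_of_submatrix_eq_self horth hB hlam hsum hτ k) j
  have h := sum_mul_eq_ite_of_orthonormal horth (τ j) j
  simp_rw [hfix, sum_mul_eq_ite_of_orthonormal horth j j] at h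
  simpa using h

end Equiv.Perm

end SimpleSpectrum

theorem stmt_4_general (K : ℕ) (B : Matrix (Fin K) (Fin K) ℝ)
    (lam : Fin K → ℝ) (q : Fin K → Fin K → ℝ)
    (horth : ∀ k l, (q k) ⬝ᵥ (q l) = if k = l then 1 else 0)
    (hEVD : B = ∑ k, lam k • Matrix.vecMulVec (q k) (q k))
    (θ η : ℝ) (hθ : 0 < θ) (hη : 0 < η)
    (hgap : ∀ k l, k ≠ l → η < |lam k - lam l|)
    (hfriend : ∀ k, θ < |∑ i, q k i|)
    (B' : Matrix (Fin K) (Fin K) ℝ)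
    (σ₁ σ₂ : Equiv.Perm (Fin K))
    (h₁ : B' = σ₁.permMatrix ℝ * B * (σ₁.permMatrix ℝ)ᵀ)
    (h₂ : B' = σ₂.permMatrix ℝ * B * (σ₂.permMatrix ℝ)ᵀ) :
    σ₁.permMatrix ℝ = σ₂.permMatrix ℝ := by
  have hlam : Function.Injective lam := fun k l hkl =>
    of_not_not fun hne => (hη.trans (hgap k l hne)).ne' (by simp [hkl])
  have hsum (k : Fin K) : ∑ i, q k i ≠ 0 := abs_ne_zero.mp (hθ.trans (hfriend k)).ne'
  have hτ : B.submatrix ⇑(σ₁ * σ₂⁻¹) ⇑(σ₁ * σ₂⁻¹) = B := by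
    rw [permMatrix_mul_mul_transpose_permMatrix] at h₁ h₂
    simpa [submatrix_submatrix] using
      congrArg (fun M => M.submatrix ⇑σ₂⁻¹ ⇑σ₂⁻¹) (h₁.symm.trans h₂)
  rw [mul_inv_eq_one.mp (Equiv.Perm.eq_one_of_submatrix_eq_self horth hEVD hlam hsum hτ)]

theorem stmt_4 (K : ℕ) (B : Matrix (Fin K) (Fin K) ℝ)
    (hB01 : ∀ i j, B i j ∈ Set.Icc (0:ℝ) 1) (hBsymm : B.IsSymm)
    (lam : Fin K → ℝ) (q : Fin K → Fin K → ℝ)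
    (horth : ∀ k l, (q k) ⬝ᵥ (q l) = if k = l then 1 else 0)
    (hEVD : B = ∑ k, lam k • Matrix.vecMulVec (q k) (q k))
    (θ η : ℝ) (hθ : 0 < θ) (hη : 0 < η)
    (hgap : ∀ k l, k ≠ l → η < |lam k - lam l|)
    (hfriend : ∀ k, θ < |∑ i, q k i|)
    (B' : Matrix (Fin K) (Fin K) ℝ) (hB' : B'.IsSymm)
    (σ₁ σ₂ : Equiv.Perm (Fin K))
    (h₁ : B' = σ₁.permMatrix ℝ * B * (σ₁.permMatrix ℝ)ᵀ)
    (h₂ : B' = σ₂.permMatrix ℝ * B * (σ₂.permMatrix ℝ)ᵀ) :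
    σ₁.permMatrix ℝ = σ₂.permMatrix ℝ :=
  stmt_4_general K B lam q horth hEVD θ η hθ hη hgap hfriend B' σ₁ σ₂ h₁ h₂
end
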